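/- If m is a minimal prime implication filter contained in a prime implication filter P of an MV-algebra, then ℓ(P) ⊆ m, where ℓ(P) is the implication filter generated by {x → p : p ∈ P, x ∉ P}. -/

import Mathlib

/-- An MV-algebra `(α, ⊕, ¬, 0)` with the standard axioms. -/
class MV (α : Type*) extends Add α, Neg α, Zero α where
  add_assoc : ∀ a b c : α, a + (b + c) = (a + b) + c
  add_comm : ∀ a b : α, a + b = b + a
  add_zero : ∀ a : α, a + 0 = a
  neg_neg : ∀ a : α, - -a = a
  add_neg_zero : ∀ a : α, a + -(0 : α) = -(0 : α)
  luk : ∀ a b : α, -(-a + b) + b = -(-b + a) + a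

namespace MV

variable {α : Type*} [MV α]

/-- The top element `1 = ¬0`. -/
def one (α : Type*) [MV α] : α := -(0 : α)

/-- Implication `x → y = ¬x ⊕ y`. -/
def imp (a b : α) : α := -a + b

/-- Strong conjunction `x ⊗ y = ¬(¬x ⊕ ¬y)`. -/
def otimes (a b : α) : α := -(-a + -b)

/-- Join `x ∨ y = (x → y) → y`. -/
def sup (a b : α) : α := imp (imp a b) b

/-- Meet `x ∧ y = ¬(¬x ∨ ¬y)`. -/
def inf (a b : α) : α := -(sup (-a) (-b))

/-- Order: `x ≤ y` iff `x → y = 1`. -/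
def le (a b : α) : Prop := imp a b = one α

/-- Strict order. -/
def lt (a b : α) : Prop := le a b ∧ a ≠ b

/-- `n`-fold `⊗`-power. -/
def pow (a : α) : ℕ → α
  | 0 => one α
  | n + 1 => otimes a (pow a n)

/-- An implication filter: a lattice filter closed under `⊗`. -/
def IsImpFilter (F : Set α) : Prop :=
  one α ∈ F ∧ (∀ x ∈ F, ∀ y : α, le x y → y ∈ F) ∧
    (∀ x ∈ F, ∀ y ∈ F, inf x y ∈ F) ∧ (∀ x ∈ F, ∀ y ∈ F, otimes x y ∈ F)

/-- A prime implication filter: proper and `x ∨ y ∈ F → x ∈ F ∨ y ∈ F`. -/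
def IsPrime (F : Set α) : Prop :=
  IsImpFilter F ∧ F ≠ Set.univ ∧ ∀ x y : α, sup x y ∈ F → x ∈ F ∨ y ∈ F

/-- A minimal prime implication filter. -/
def IsMinimalPrime (F : Set α) : Prop :=
  IsPrime F ∧ ∀ G : Set α, IsPrime G → G ⊆ F → G = F

/-- A maximal proper implication filter. -/
def IsMaximal (F : Set α) : Prop :=
  IsImpFilter F ∧ F ≠ Set.univ ∧
    ∀ G : Set α, IsImpFilter G → G ≠ Set.univ → F ⊆ G → G = F

/-- A counit: `u < 1` joining to `1` with some `v < 1`. -/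
def IsCounit (u : α) : Prop :=
  lt u (one α) ∧ ∃ v : α, lt v (one α) ∧ sup u v = one α

/-- The implication filter generated by a set. -/
def gen (S : Set α) : Set α := ⋂₀ {F : Set α | IsImpFilter F ∧ S ⊆ F}

/-- The Conrad filter: the implication filter generated by all counits. -/
def conrad (α : Type*) [MV α] : Set α := gen {u : α | IsCounit u}

/-- The localizing filter `ℓ(P)`, generated by `{x → p : p ∈ P, x ∉ P}`. -/
def locFilter (P : Set α) : Set α :=
  gen {z : α | ∃ x : α, x ∉ P ∧ ∃ p ∈ P, z = imp x p}

end MV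

/-! Prelinearity puts `(x → p) ∨ (p → x) = 1` into the prime filter `m`, so one of the two
implications lies in `m`. For `x ∉ P` and `p ∈ P` it cannot be `p → x`: that would lie in `P ⊇ m`,
and modus ponens in `P` (via `p ⊗ (p → x) = p ∧ x`) would give `x ∈ P`. Hence every generator
`x → p` of `ℓ(P)` lies in `m`. -/

namespace MV

variable {α : Type*} [MV α]

protected theorem zero_add (a : α) : 0 + a = a := by
  rw [MV.add_comm]; exact MV.add_zero a

protected theorem add_one (a : α) : a + one α = one α := MV.add_neg_zero a

protected theorem neg_one : -one α = 0 := MV.neg_neg 0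

protected theorem neg_add_self (a : α) : -a + a = one α := by
  simpa only [MV.neg_one, MV.zero_add, MV.add_one] using MV.luk (one α) a

theorem imp_self (a : α) : imp a a = one α := MV.neg_add_self a

theorem sup_comm (a b : α) : sup a b = sup b a := MV.luk a b

theorem sup_eq_left_of_le {a b : α} (h : le b a) : sup a b = a := by
  rw [sup_comm, sup, h, imp, MV.neg_one, MV.zero_add]

theorem le_imp (x y : α) : le x (imp y x) := by
  show -x + (-y + x) = one α
  rw [MV.add_comm (-y), MV.add_assoc, MV.neg_add_self, MV.add_comm, MV.add_one]

theorem neg_le_neg {a b : α} (h : le a b) : le (-b) (-a) := by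
  rwa [le, imp, MV.neg_neg, MV.add_comm]

theorem imp_imp_swap (x y : α) : imp (imp x y) (imp y x) = imp y x := by
  have hx : imp y x = -(sup x y) + x := by
    conv_lhs => rw [← sup_eq_left_of_le (le_imp x y)]
    exact congrArg (fun s => -s + x) (sup_comm y x)
  have hy : -(imp x y) + -(sup x y) = -y := by
    have h := sup_eq_left_of_le (neg_le_neg (le_imp y x))
    rw [sup, imp, imp, MV.neg_neg, MV.add_comm] at h
    show -(imp x y) + -(-(imp x y) + y) = -y
    rwa [MV.add_comm (-imp x y) y]
  calc imp (imp x y) (imp y x)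
      = (-(imp x y) + -(sup x y)) + x := by rw [imp, hx, MV.add_assoc]
    _ = imp y x := by rw [hy, imp]

theorem sup_imp_imp (x y : α) : sup (imp x y) (imp y x) = one α := by
  rw [sup, imp_imp_swap, imp_self]

theorem otimes_imp (p x : α) : otimes p (imp p x) = inf p x := by
  rw [inf, sup_comm]
  simp only [otimes, sup, imp, MV.neg_neg]
  rw [MV.add_comm x, MV.add_comm (-(-p + x))]

theorem inf_le_right (p x : α) : le (inf p x) x := by
  show -(-(sup (-p) (-x))) + x = one α
  rw [MV.neg_neg, sup, imp, ← MV.add_assoc, MV.neg_add_self, MV.add_one]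

theorem gen_subset {S F : Set α} (hF : IsImpFilter F) (hSF : S ⊆ F) : gen S ⊆ F :=
  fun _ hz => hz F ⟨hF, hSF⟩

theorem IsImpFilter.mem_of_imp_mem {F : Set α} (hF : IsImpFilter F) {p x : α} (hp : p ∈ F)
    (hpx : imp p x ∈ F) : x ∈ F := by
  have hinf : inf p x ∈ F := otimes_imp p x ▸ hF.2.2.2 p hp _ hpx
  exact hF.2.1 _ hinf x (inf_le_right p x)

theorem IsPrime.imp_mem_or_imp_mem {Q : Set α} (hQ : IsPrime Q) (x y : α) :
    imp x y ∈ Q ∨ imp y x ∈ Q :=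
  hQ.2.2 _ _ (sup_imp_imp x y ▸ hQ.1.1)

theorem locFilter_subset_of_isPrime {P Q : Set α} (hQ : IsPrime Q) (hP : IsImpFilter P)
    (hQP : Q ⊆ P) : locFilter P ⊆ Q := by
  refine gen_subset hQ.1 ?_
  rintro _ ⟨x, hxP, p, hpP, rfl⟩
  refine (hQ.imp_mem_or_imp_mem x p).resolve_right fun hpx => hxP ?_
  exact hP.mem_of_imp_mem hpP (hQP hpx)

end MV

open MV

/-- `ℓ(P)` is contained in every minimal prime below `P`. -/
theorem locFilter_subset_minimal {α : Type*} [MV α] (P m : Set α) (hP : IsPrime P)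
    (hm : IsMinimalPrime m) (hmP : m ⊆ P) :
    locFilter P ⊆ m :=
  locFilter_subset_of_isPrime hm.1 hP.1 hmP
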